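/- arXiv:2212.06296 — 3 statements merged into one kernel-verified Lean document; each statement's English description precedes it below -/
import Mathlib

section
/- Let x⁰ be a feasible solution of the subtour elimination LP on a finite vertex set V, and suppose there is a pair e₀ = {u₀, v₀} with x⁰_{e₀} = 1. Let E be the set of pairs in the support of x⁰ other than e₀, and let x be the restriction of x⁰ to E. Then x lies in the spanning tree polytope of G = (V, E): x_e ≥ 0 for all e ∈ E, x(E) = |V| − 1, and x(E(S)) ≤ |S| − 1 for every nonempty S ⊆ V, where E(S) is the set of edges of E with both endpoints in S. -/
/-!
Summing the degree equations over a vertex set `S` counts every edge inside `S` twice and every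
edge of the cut `δ(S)` once, so `2|S| = 2 x(E(S)) + x(δ(S))`. For `S = V` the cut is empty and
the total weight is `|V|`; dropping `e₀` (weight `1`) and the pairs of weight `0` leaves
`|V| - 1`. For `S ≠ V` the cut constraint `x(δ(S)) ≥ 2` gives `x(E(S)) ≤ |S| - 1`.
-/

open Finset

namespace SubtourLP

variable {V : Type*} [Fintype V] [DecidableEq V]

def incidentEdges (v : V) : Finset (Sym2 V) :=
  univ.filter fun e => ¬ e.IsDiag ∧ v ∈ e

def inducedEdges (S : Finset V) : Finset (Sym2 V) :=
  S.sym2.filter fun e => ¬ e.IsDiag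

def cutEdges (S : Finset V) : Finset (Sym2 V) :=
  univ.filter fun e => ∃ u ∈ S, ∃ w ∉ S, e = s(u, w)

omit [Fintype V] in
lemma mk_mem_inducedEdges {S : Finset V} {a b : V} :
    s(a, b) ∈ inducedEdges S ↔ a ≠ b ∧ a ∈ S ∧ b ∈ S := by
  simp [inducedEdges, and_comm]

lemma mk_mem_cutEdges {S : Finset V} {a b : V} :
    s(a, b) ∈ cutEdges S ↔ (a ∈ S ∧ b ∉ S) ∨ (b ∈ S ∧ a ∉ S) := by
  simp only [cutEdges, mem_filter, mem_univ, true_and, Sym2.eq_iff]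
  constructor
  · rintro ⟨u, hu, w, hw, ⟨rfl, rfl⟩ | ⟨rfl, rfl⟩⟩
    exacts [Or.inl ⟨hu, hw⟩, Or.inr ⟨hu, hw⟩]
  · rintro (⟨ha, hb⟩ | ⟨hb, ha⟩)
    exacts [⟨a, ha, b, hb, Or.inl ⟨rfl, rfl⟩⟩, ⟨b, hb, a, ha, Or.inr ⟨rfl, rfl⟩⟩]

lemma cutEdges_univ : cutEdges (univ : Finset V) = ∅ := by
  simp [cutEdges]

lemma inducedEdges_univ :
    inducedEdges (univ : Finset V) = univ.filter fun e => ¬ e.IsDiag := by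
  simp [inducedEdges]

lemma sum_ite_incident (x : Sym2 V → ℝ) (S : Finset V) (e : Sym2 V) :
    ∑ v ∈ S, (if ¬ e.IsDiag ∧ v ∈ e then x e else 0) =
      (if e ∈ inducedEdges S then 2 * x e else 0) + (if e ∈ cutEdges S then x e else 0) := by
  induction e using Sym2.ind with | h a b => ?_
  by_cases hab : a = b
  · subst hab
    simp [mk_mem_inducedEdges, mk_mem_cutEdges]
  have hsplit : ∀ v, (if ¬ s(a, b).IsDiag ∧ v ∈ s(a, b) then x s(a, b) else 0) =
      (if a = v then x s(a, b) else 0) + (if b = v then x s(a, b) else 0) := by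
    intro v
    by_cases hva : a = v <;> by_cases hvb : b = v <;> simp_all [eq_comm]
  simp only [hsplit, sum_add_distrib, sum_ite_eq, mk_mem_inducedEdges, mk_mem_cutEdges]
  by_cases ha : a ∈ S <;> by_cases hb : b ∈ S <;> simp [ha, hb, hab, two_mul]

lemma two_mul_card_eq (x : Sym2 V → ℝ) (hdeg : ∀ v, ∑ e ∈ incidentEdges v, x e = 2)
    (S : Finset V) :
    2 * (#S : ℝ) = 2 * ∑ e ∈ inducedEdges S, x e + ∑ e ∈ cutEdges S, x e := by
  calc 2 * (#S : ℝ) = ∑ v ∈ S, ∑ e ∈ incidentEdges v, x e := by simp [hdeg, mul_comm]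
    _ = ∑ e, ∑ v ∈ S, (if ¬ e.IsDiag ∧ v ∈ e then x e else 0) := by
      simp only [incidentEdges, sum_filter]
      exact sum_comm
    _ = _ := by
      rw [sum_congr rfl fun e _ => sum_ite_incident x S e, sum_add_distrib, sum_ite_mem,
        sum_ite_mem, univ_inter, univ_inter, mul_sum]

lemma sum_nondiag_eq_card (x : Sym2 V → ℝ) (hdeg : ∀ v, ∑ e ∈ incidentEdges v, x e = 2) :
    ∑ e ∈ univ.filter (fun e : Sym2 V => ¬ e.IsDiag), x e = Fintype.card V := by
  have h := two_mul_card_eq x hdeg univ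
  rw [inducedEdges_univ, cutEdges_univ, sum_empty, card_univ] at h
  linarith

lemma sum_inducedEdges_le (x : Sym2 V → ℝ) (hdeg : ∀ v, ∑ e ∈ incidentEdges v, x e = 2)
    {S : Finset V} (hcut : 2 ≤ ∑ e ∈ cutEdges S, x e) :
    ∑ e ∈ inducedEdges S, x e ≤ #S - 1 := by
  linarith [two_mul_card_eq x hdeg S]

omit [Fintype V] in
lemma filter_mk_mem_subset_inducedEdges {E : Finset (Sym2 V)} (hE : ∀ e ∈ E, ¬ e.IsDiag)
    (S : Finset V) :
    E.filter (fun e => ∃ a ∈ S, ∃ b ∈ S, e = s(a, b)) ⊆ inducedEdges S := by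
  intro e he
  obtain ⟨heE, a, ha, b, hb, rfl⟩ := mem_filter.mp he
  exact mk_mem_inducedEdges.mpr ⟨fun hab => hE _ heE (by simp [hab]), ha, hb⟩

end SubtourLP

open SubtourLP

theorem stmt_1 {V : Type*} [Fintype V] [DecidableEq V]
    (x : Sym2 V → ℝ)
    (hx0 : ∀ e : Sym2 V, 0 ≤ x e)
    (hdeg : ∀ v : V,
      ∑ e ∈ (univ.filter fun e : Sym2 V => ¬ e.IsDiag ∧ v ∈ e), x e = 2)
    (hcut : ∀ S : Finset V, S.Nonempty → S ≠ univ →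
      2 ≤ ∑ e ∈ ((univ : Finset (Sym2 V)).filter
            fun e => ∃ u ∈ S, ∃ w ∉ S, e = s(u, w)), x e)
    (u₀ v₀ : V) (hne : u₀ ≠ v₀) (h1 : x s(u₀, v₀) = 1)
    (E : Finset (Sym2 V))
    (hEdef : E = (univ : Finset (Sym2 V)).filter
      (fun e => ¬ e.IsDiag ∧ x e ≠ 0 ∧ e ≠ s(u₀, v₀))) :
    (∀ e ∈ E, 0 ≤ x e) ∧
    (∑ e ∈ E, x e = (Fintype.card V : ℝ) - 1) ∧
    (∀ S : Finset V, S.Nonempty →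
      ∑ e ∈ E.filter (fun e => ∃ a ∈ S, ∃ b ∈ S, e = s(a, b)), x e
        ≤ (S.card : ℝ) - 1) := by
  have hE : E = ((univ.filter fun e : Sym2 V => ¬ e.IsDiag).erase s(u₀, v₀)).filter
      (fun e => x e ≠ 0) := by
    ext e
    simp only [hEdef, mem_filter, mem_erase, mem_univ, true_and]
    tauto
  have he₀ : s(u₀, v₀) ∈ univ.filter fun e : Sym2 V => ¬ e.IsDiag := by simp [hne]
  have hsumE : ∑ e ∈ E, x e = (Fintype.card V : ℝ) - 1 := by
    rw [← sum_nondiag_eq_card x hdeg, ← sum_erase_add _ _ he₀, hE, sum_filter_ne_zero, h1]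
    ring
  have hE_nondiag : ∀ e ∈ E, ¬ e.IsDiag := fun e he => (mem_filter.mp (hEdef ▸ he)).2.1
  refine ⟨fun e _ => hx0 e, hsumE, fun S hS => ?_⟩
  by_cases hSu : S = univ
  · subst hSu
    calc _ ≤ ∑ e ∈ E, x e := sum_le_sum_of_subset_of_nonneg (filter_subset _ _) fun e _ _ => hx0 e
      _ = _ := by rw [hsumE, card_univ]
  · calc _ ≤ ∑ e ∈ inducedEdges S, x e :=
          sum_le_sum_of_subset_of_nonneg (filter_mk_mem_subset_inducedEdges hE_nondiag S)
            fun e _ _ => hx0 e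
      _ ≤ _ := sum_inducedEdges_le x hdeg (hcut S hS hSu)
end

section
/- Let G = (V, E) be a finite connected graph with n = |V| ≥ 4 vertices and let η > 0. Let x : E → ℝ≥0 satisfy x(δ(v)) = 2 for every vertex v ∈ V and x(δ(S)) ≥ 2 + η for every S ⊆ V with 2 ≤ |S| ≤ n − 2. Let T ⊆ E be a spanning tree of G, let O(T) be the set of vertices of odd degree in T, and define g : E → ℝ≥0 by g_e = x_e/(2+η) if both endpoints of e have even degree in T, and g_e = x_e/2 otherwise. Then g lies in the O(T)-join polyhedron: for every S ⊆ V with |S ∩ O(T)| odd, g(δ(S)) ≥ 1. -/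
open Finset

/-- A spanning tree of the graph with vertex set `V` and edge set `E`:
a subset of the edges of size `|V| - 1` forming a connected spanning subgraph. -/
def IsSpanningTree {V : Type*} [Fintype V] (T : Finset (Sym2 V)) : Prop :=
  (SimpleGraph.fromEdgeSet (T : Set (Sym2 V))).Connected ∧
    T.card = Fintype.card V - 1

/-!
If `|S| ≤ 1`, or `|V \ S| ≤ 1` after replacing `S` by its complement (which has the same cut and,
since `|O(T)|` is even by the handshake lemma, also meets `O(T)` oddly), then the cut is the star
of a single vertex `v` of odd `T`-degree: there `g = x / 2` on `δ(v)` and `x(δ(v)) = 2`.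
For every other `S` the cut has `x(δ(S)) ≥ 2 + η`, while `g ≥ x / (2 + η)` on every edge.
-/

section

variable {V : Type*} [Fintype V] [DecidableEq V]

theorem sum_card_filter_mem_eq_two_mul_card {T : Finset (Sym2 V)} (hT : ∀ e ∈ T, ¬ e.IsDiag) :
    ∑ v, #(T.filter (v ∈ ·)) = 2 * #T := by
  simp_rw [card_filter]
  rw [sum_comm, mul_comm, ← smul_eq_mul, ← sum_const]
  refine sum_congr rfl fun e he => ?_
  rw [← card_filter, ← Sym2.card_toFinset_of_not_isDiag e (hT e he)]
  congr 1
  ext v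
  simp

theorem even_card_filter_odd_card_filter_mem {T : Finset (Sym2 V)} (hT : ∀ e ∈ T, ¬ e.IsDiag) :
    Even #(univ.filter fun v => Odd #(T.filter (v ∈ ·))) := by
  rw [← even_sum_iff_even_card_odd, sum_card_filter_mem_eq_two_mul_card hT]
  exact even_two_mul _

theorem odd_card_compl_inter_of_even {S O : Finset V} (hO : Even #O) (hSO : Odd #(S ∩ O)) :
    Odd #(Sᶜ ∩ O) := by
  have hsplit : #(O ∩ S) + #(O \ S) = #O := card_inter_add_card_sdiff O S
  rw [inter_comm] at hSO
  rw [inter_comm, ← sdiff_eq_inter_compl]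
  rcases hO with ⟨k, hk⟩
  rcases hSO with ⟨m, hm⟩
  exact ⟨k - m - 1, by omega⟩

/-- `δ(S) ∩ E`. -/
def cut (E : Finset (Sym2 V)) (S : Finset V) : Finset (Sym2 V) :=
  E.filter fun e => ∃ u ∈ S, ∃ w ∉ S, e = s(u, w)

theorem cut_compl (E : Finset (Sym2 V)) (S : Finset V) : cut E Sᶜ = cut E S := by
  refine filter_congr fun e _ => ⟨?_, ?_⟩ <;>
    rintro ⟨u, hu, w, hw, rfl⟩ <;>
    exact ⟨w, by simpa using hw, u, by simpa using hu, Sym2.eq_swap⟩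

theorem cut_singleton {E : Finset (Sym2 V)} (hE : ∀ e ∈ E, ¬ e.IsDiag) (v : V) :
    cut E {v} = E.filter (v ∈ ·) := by
  refine filter_congr fun e he => ⟨?_, fun hv => ?_⟩
  · rintro ⟨u, hu, w, -, rfl⟩
    simp [mem_singleton.mp hu]
  · exact ⟨v, mem_singleton_self v, Sym2.Mem.other hv, by simpa using Sym2.other_ne (hE e he) hv,
      (Sym2.other_spec hv).symm⟩

variable {E T : Finset (Sym2 V)} {η : ℝ} {x g : Sym2 V → ℝ}

theorem one_le_sum_cut_of_card_le_one (hE : ∀ e ∈ E, ¬ e.IsDiag)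
    (hdeg : ∀ v : V, ∑ e ∈ E.filter (v ∈ ·), x e = 2)
    (hg : ∀ e ∈ E, g e =
      if ∀ v ∈ e, Even (T.filter (v ∈ ·)).card then x e / (2 + η) else x e / 2)
    {S : Finset V} (hS : #S ≤ 1)
    (hodd : Odd #(S ∩ univ.filter fun v => Odd #(T.filter (v ∈ ·)))) :
    1 ≤ ∑ e ∈ cut E S, g e := by
  obtain ⟨v, hvS, hv⟩ : ∃ v ∈ S, Odd #(T.filter (v ∈ ·)) := by
    obtain ⟨v, hv⟩ := card_pos.mp hodd.pos
    simp only [mem_inter, mem_filter, mem_univ, true_and] at hv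
    exact ⟨v, hv⟩
  obtain rfl : S = {v} := eq_singleton_iff_unique_mem.mpr
    ⟨hvS, fun w hw => card_le_one.mp hS w hw v hvS⟩
  have hhalf : ∀ e ∈ E.filter (v ∈ ·), g e = x e / 2 := by
    intro e he
    rw [mem_filter] at he
    rw [hg e he.1, if_neg fun hall => Nat.not_even_iff_odd.mpr hv (hall v he.2)]
  rw [cut_singleton hE, sum_congr rfl hhalf, ← sum_div, hdeg v]
  norm_num

theorem one_le_sum_of_two_add_le_sum (hη : 0 < η) (hx0 : ∀ e ∈ E, 0 ≤ x e)
    (hg : ∀ e ∈ E, g e =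
      if ∀ v ∈ e, Even (T.filter (v ∈ ·)).card then x e / (2 + η) else x e / 2)
    {F : Finset (Sym2 V)} (hFE : F ⊆ E) (hF : 2 + η ≤ ∑ e ∈ F, x e) :
    1 ≤ ∑ e ∈ F, g e := by
  have h2η : 0 < 2 + η := by linarith
  have hxg : ∀ e ∈ F, x e ≤ (2 + η) * g e := by
    intro e he
    rw [hg e (hFE he)]
    split
    · rw [mul_div_cancel₀ _ h2η.ne']
    · have := mul_nonneg hη.le (hx0 e (hFE he))
      linarith
  rw [← mul_le_mul_iff_right₀ h2η, mul_one, mul_sum]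
  exact hF.trans (sum_le_sum hxg)

end

open scoped Classical in
theorem stmt_7_general {V : Type*} [Fintype V] [DecidableEq V]
    (E : Finset (Sym2 V)) (hE : ∀ e ∈ E, ¬ e.IsDiag)
    (η : ℝ) (hη : 0 < η)
    (x : Sym2 V → ℝ) (hx0 : ∀ e ∈ E, 0 ≤ x e)
    (hdeg : ∀ v : V, ∑ e ∈ E.filter (fun e => v ∈ e), x e = 2)
    (hcut : ∀ S : Finset V, 2 ≤ S.card → S.card ≤ Fintype.card V - 2 →
      2 + η ≤ ∑ e ∈ E.filter (fun e => ∃ u ∈ S, ∃ w ∉ S, e = s(u, w)), x e)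
    (T : Finset (Sym2 V)) (hTE : T ⊆ E)
    (g : Sym2 V → ℝ)
    (hg : ∀ e ∈ E, g e =
      if ∀ v ∈ e, Even (T.filter (fun f => v ∈ f)).card
      then x e / (2 + η) else x e / 2)
    (S : Finset V)
    (hodd : Odd ((S ∩ univ.filter
        (fun v => Odd (T.filter (fun f => v ∈ f)).card)).card)) :
    1 ≤ ∑ e ∈ E.filter (fun e => ∃ u ∈ S, ∃ w ∉ S, e = s(u, w)), g e := by
  change 1 ≤ ∑ e ∈ cut E S, g e
  by_cases hsmall : #S ≤ 1
  · exact one_le_sum_cut_of_card_le_one hE hdeg hg hsmall hodd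
  by_cases hlarge : #S ≤ Fintype.card V - 2
  · exact one_le_sum_of_two_add_le_sum hη hx0 hg (filter_subset _ _) (hcut S (by omega) hlarge)
  rw [← cut_compl]
  have hOeven := even_card_filter_odd_card_filter_mem fun e he => hE e (hTE he)
  refine one_le_sum_cut_of_card_le_one hE hdeg hg ?_ (odd_card_compl_inter_of_even hOeven hodd)
  rw [card_compl]
  omega

open scoped Classical in
/-- In the degree cut case, the vector `g` lies in the `O(T)`-join polyhedron. -/
theorem stmt_7 {V : Type*} [Fintype V] [DecidableEq V]
    (E : Finset (Sym2 V)) (hE : ∀ e ∈ E, ¬ e.IsDiag)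
    (hconn : (SimpleGraph.fromEdgeSet (E : Set (Sym2 V))).Connected)
    (hn : 4 ≤ Fintype.card V)
    (η : ℝ) (hη : 0 < η)
    (x : Sym2 V → ℝ) (hx0 : ∀ e ∈ E, 0 ≤ x e)
    (hdeg : ∀ v : V, ∑ e ∈ E.filter (fun e => v ∈ e), x e = 2)
    (hcut : ∀ S : Finset V, 2 ≤ S.card → S.card ≤ Fintype.card V - 2 →
      2 + η ≤ ∑ e ∈ E.filter (fun e => ∃ u ∈ S, ∃ w ∉ S, e = s(u, w)), x e)
    (T : Finset (Sym2 V)) (hTE : T ⊆ E) (hT : IsSpanningTree T)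
    (g : Sym2 V → ℝ)
    (hg : ∀ e ∈ E, g e =
      if ∀ v ∈ e, Even (T.filter (fun f => v ∈ f)).card
      then x e / (2 + η) else x e / 2)
    (S : Finset V)
    (hodd : Odd ((S ∩ univ.filter
        (fun v => Odd (T.filter (fun f => v ∈ f)).card)).card)) :
    1 ≤ ∑ e ∈ E.filter (fun e => ∃ u ∈ S, ∃ w ∉ S, e = s(u, w)), g e :=
  stmt_7_general E hE η hη x hx0 hdeg hcut T hTE g hg S hodd
end

section
/- Let G = (V, E) be a finite connected graph with n = |V| ≥ 4 vertices and let η > 0. Let x : E → ℝ≥0 satisfy x(δ(v)) = 2 for every vertex v ∈ V and x(δ(S)) ≥ 2 + η for every S ⊆ V with 2 ≤ |S| ≤ n − 2. Let E_g ⊆ E be a set of 'good' edges such that x(δ(v) ∩ E_g) ≥ 1 for every vertex v. Let T ⊆ E be a spanning tree of G and O(T) the set of vertices of odd degree in T. Define b : E → ℝ≥0 by b_e = ((1+η)/(2+η)) x_e if e ∈ E_g and b_e = x_e/(2+η) otherwise. Then b lies in the O(T)-join polyhedron: for every S ⊆ V with |S ∩ O(T)| odd, b(δ(S)) ≥ 1.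 -/
open Finset

/-!
Since `(2 + η) b = x + η x|_{E_g}`, the bound `b(δ(S)) ≥ 1` amounts to
`x(δ(S)) + η x(δ(S) ∩ E_g) ≥ 2 + η`. By the handshake lemma `O(T)` has even size, so a set
`S` meeting it oddly is neither empty nor everything. If `S` or its complement is a single
vertex `v`, then `δ(S) = δ(v)` and the bound follows from `x(δ(v)) = 2` and
`x(δ(v) ∩ E_g) ≥ 1`; otherwise `x(δ(S)) ≥ 2 + η` already suffices.
-/

section Cuts

variable {V : Type*} [Fintype V] [DecidableEq V]

def edgeCut (E : Finset (Sym2 V)) (S : Finset V) : Finset (Sym2 V) :=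
  E.filter (fun e => ∃ u ∈ S, ∃ w ∉ S, e = s(u, w))

def oddVertices (T : Finset (Sym2 V)) : Finset V :=
  univ.filter (fun v => Odd (T.filter (fun f => v ∈ f)).card)

theorem sum_card_incident_eq_two_mul_card {T : Finset (Sym2 V)} (hT : ∀ e ∈ T, ¬ e.IsDiag) :
    ∑ v, (T.filter (fun f => v ∈ f)).card = 2 * T.card := by
  rw [mul_comm, ← smul_eq_mul, ← sum_const]
  refine (sum_card_bipartiteAbove_eq_sum_card_bipartiteBelow (· ∈ ·)).trans
    (sum_congr rfl fun e he => ?_)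
  rw [← Sym2.card_toFinset_of_not_isDiag e (hT e he)]
  congr 1
  ext v
  simp [bipartiteBelow]

theorem even_card_oddVertices {T : Finset (Sym2 V)} (hT : ∀ e ∈ T, ¬ e.IsDiag) :
    Even (oddVertices T).card := by
  rw [oddVertices, ← even_sum_iff_even_card_odd, sum_card_incident_eq_two_mul_card hT]
  exact even_two_mul _

theorem nonempty_and_ne_univ_of_odd_card_inter_oddVertices {T : Finset (Sym2 V)}
    (hT : ∀ e ∈ T, ¬ e.IsDiag) {S : Finset V} (hS : Odd (S ∩ oddVertices T).card) :
    S.Nonempty ∧ S ≠ univ := by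
  constructor
  · rw [nonempty_iff_ne_empty]
    rintro rfl
    simp at hS
  · rintro rfl
    rw [univ_inter] at hS
    exact Nat.not_odd_iff_even.mpr (even_card_oddVertices hT) hS

theorem edgeCut_compl (E : Finset (Sym2 V)) (S : Finset V) :
    edgeCut E Sᶜ = edgeCut E S := by
  refine filter_congr fun e _ => ?_
  constructor <;>
  · rintro ⟨u, hu, w, hw, rfl⟩
    exact ⟨w, by simpa using hw, u, by simpa using hu, Sym2.eq_swap⟩

theorem edgeCut_singleton {E : Finset (Sym2 V)} (hE : ∀ e ∈ E, ¬ e.IsDiag) (v : V) :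
    edgeCut E {v} = E.filter (fun e => v ∈ e) := by
  refine filter_congr fun e he => ⟨?_, fun hv => ?_⟩
  · rintro ⟨u, hu, w, -, rfl⟩
    simp_all
  · obtain ⟨w, rfl⟩ := Sym2.mem_iff_exists.mp hv
    have hvw : v ≠ w := by simpa using hE _ he
    exact ⟨v, mem_singleton_self v, w, by simpa using hvw.symm, rfl⟩

theorem eq_singleton_or_compl_eq_singleton_or_two_le_card {S : Finset V} (hS : S.Nonempty)
    (hSu : S ≠ univ) :
    (∃ v, S = {v}) ∨ (∃ v, Sᶜ = {v}) ∨ (2 ≤ S.card ∧ S.card ≤ Fintype.card V - 2) := by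
  have h0 := hS.card_pos
  have h1 := (card_lt_iff_ne_univ S).mpr hSu
  have hc := card_compl S
  rw [← card_eq_one, ← card_eq_one]
  omega

end Cuts

section Weights

variable {α : Type*} [DecidableEq α] {D Eg : Finset α} {x b : α → ℝ} {η : ℝ}

theorem two_add_mul_sum_eq (hη : 2 + η ≠ 0)
    (hb : ∀ e ∈ D, b e = if e ∈ Eg then ((1 + η) / (2 + η)) * x e else x e / (2 + η)) :
    (2 + η) * ∑ e ∈ D, b e = ∑ e ∈ D, x e + η * ∑ e ∈ D.filter (· ∈ Eg), x e := by
  rw [mul_sum, mul_sum, sum_filter, ← sum_add_distrib]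
  refine sum_congr rfl fun e he => ?_
  rw [hb e he]
  split_ifs
  · field_simp
  · rw [add_zero]
    field_simp

theorem one_le_sum_of_two_add_le (hη : 0 < η)
    (hb : ∀ e ∈ D, b e = if e ∈ Eg then ((1 + η) / (2 + η)) * x e else x e / (2 + η))
    (h : 2 + η ≤ ∑ e ∈ D, x e + η * ∑ e ∈ D.filter (· ∈ Eg), x e) :
    1 ≤ ∑ e ∈ D, b e := by
  have h2η : 0 < 2 + η := by linarith
  rw [← two_add_mul_sum_eq h2η.ne' hb] at h
  exact (le_mul_iff_one_le_right h2η).mp h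

end Weights

theorem stmt_8_general {V : Type*} [Fintype V] [DecidableEq V]
    (E : Finset (Sym2 V)) (hE : ∀ e ∈ E, ¬ e.IsDiag)
    (η : ℝ) (hη : 0 < η)
    (x : Sym2 V → ℝ) (hx0 : ∀ e ∈ E, 0 ≤ x e)
    (hdeg : ∀ v : V, ∑ e ∈ E.filter (fun e => v ∈ e), x e = 2)
    (hcut : ∀ S : Finset V, 2 ≤ S.card → S.card ≤ Fintype.card V - 2 →
      2 + η ≤ ∑ e ∈ E.filter (fun e => ∃ u ∈ S, ∃ w ∉ S, e = s(u, w)), x e)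
    (Eg : Finset (Sym2 V))
    (hgood : ∀ v : V, 1 ≤ ∑ e ∈ (E ∩ Eg).filter (fun e => v ∈ e), x e)
    (T : Finset (Sym2 V)) (hTE : T ⊆ E)
    (b : Sym2 V → ℝ)
    (hb : ∀ e ∈ E, b e =
      if e ∈ Eg then ((1 + η) / (2 + η)) * x e else x e / (2 + η))
    (S : Finset V)
    (hodd : Odd ((S ∩ univ.filter
        (fun v => Odd (T.filter (fun f => v ∈ f)).card)).card)) :
    1 ≤ ∑ e ∈ E.filter (fun e => ∃ u ∈ S, ∃ w ∉ S, e = s(u, w)), b e := by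
  have hbE {D : Finset (Sym2 V)} (hD : D ⊆ E) := fun e he => hb e (hD he)
  have hvertex (v : V) : 1 ≤ ∑ e ∈ E.filter (fun e => v ∈ e), b e := by
    refine one_le_sum_of_two_add_le hη (hbE (filter_subset _ _)) ?_
    have hgood_v : (E ∩ Eg).filter (fun e => v ∈ e) =
        (E.filter (fun e => v ∈ e)).filter (· ∈ Eg) := by
      ext e; simp only [mem_filter, mem_inter]; tauto
    have := mul_le_mul_of_nonneg_left (hgood v) hη.le
    rw [hgood_v] at this
    linarith [hdeg v]
  obtain ⟨hS, hSu⟩ :=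
    nonempty_and_ne_univ_of_odd_card_inter_oddVertices (fun e he => hE e (hTE he)) hodd
  change 1 ≤ ∑ e ∈ edgeCut E S, b e
  rcases eq_singleton_or_compl_eq_singleton_or_two_le_card hS hSu with
    ⟨v, rfl⟩ | ⟨v, hv⟩ | ⟨h2, hn2⟩
  · rw [edgeCut_singleton hE]; exact hvertex v
  · rw [← edgeCut_compl, hv, edgeCut_singleton hE]; exact hvertex v
  · refine one_le_sum_of_two_add_le hη (hbE (filter_subset _ _)) ?_
    have hgood_nonneg : 0 ≤ ∑ e ∈ (edgeCut E S).filter (· ∈ Eg), x e :=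
      sum_nonneg fun e he => hx0 e (mem_filter.mp (mem_filter.mp he).1).1
    have hxS : 2 + η ≤ ∑ e ∈ edgeCut E S, x e := hcut S h2 hn2
    linarith [mul_nonneg hη.le hgood_nonneg]

/-- In the degree cut case, the vector `b` built from good edges lies in the
`O(T)`-join polyhedron. -/
theorem stmt_8 {V : Type*} [Fintype V] [DecidableEq V]
    (E : Finset (Sym2 V)) (hE : ∀ e ∈ E, ¬ e.IsDiag)
    (hconn : (SimpleGraph.fromEdgeSet (E : Set (Sym2 V))).Connected)
    (hn : 4 ≤ Fintype.card V)
    (η : ℝ) (hη : 0 < η)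
    (x : Sym2 V → ℝ) (hx0 : ∀ e ∈ E, 0 ≤ x e)
    (hdeg : ∀ v : V, ∑ e ∈ E.filter (fun e => v ∈ e), x e = 2)
    (hcut : ∀ S : Finset V, 2 ≤ S.card → S.card ≤ Fintype.card V - 2 →
      2 + η ≤ ∑ e ∈ E.filter (fun e => ∃ u ∈ S, ∃ w ∉ S, e = s(u, w)), x e)
    (Eg : Finset (Sym2 V)) (hEg : Eg ⊆ E)
    (hgood : ∀ v : V, 1 ≤ ∑ e ∈ (E ∩ Eg).filter (fun e => v ∈ e), x e)
    (T : Finset (Sym2 V)) (hTE : T ⊆ E) (hT : IsSpanningTree T)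
    (b : Sym2 V → ℝ)
    (hb : ∀ e ∈ E, b e =
      if e ∈ Eg then ((1 + η) / (2 + η)) * x e else x e / (2 + η))
    (S : Finset V)
    (hodd : Odd ((S ∩ univ.filter
        (fun v => Odd (T.filter (fun f => v ∈ f)).card)).card)) :
    1 ≤ ∑ e ∈ E.filter (fun e => ∃ u ∈ S, ∃ w ∉ S, e = s(u, w)), b e :=
  stmt_8_general E hE η hη x hx0 hdeg hcut Eg hgood T hTE b hb S hodd
end
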